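/- For each n ≥ 1 and each k ∈ {0,...,n−1}, v_n^+ satisfies −(v_n^+)''(x) = (−1)^k on the open interval (k/n, (k+1)/n), and v_n^+(x) > 0 on (k/n,(k+1)/n) when k is even, v_n^+(x) < 0 when k is odd; consequently −(v_n^+)''(x) ∈ H_0(v_n^+(x)) for all x in (0,1) except the points k/n. -/

import Mathlib

/-- The stationary solution `v_n^+`. -/
noncomputable def vplus (n : ℕ) (x : ℝ) : ℝ :=
  let k : ℤ := ⌊(n : ℝ) * x⌋
  let y : ℝ := x - (k : ℝ) / n
  if Even k then -y ^ 2 / 2 + y / (2 * n) else y ^ 2 / 2 - y / (2 * n)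

/-- The Heaviside set-valued map: `{−1}` for `s < 0`, `[−1,1]` for `s = 0`, `{1}` for `s > 0`. -/
noncomputable def H0 (s : ℝ) : Set ℝ :=
  if s < 0 then {-1} else if s = 0 then Set.Icc (-1) 1 else {1}

/-- On each `(k/n,(k+1)/n)` one has `−(v_n^+)'' = (−1)^k`, with `v_n^+ > 0` for even `k`
and `v_n^+ < 0` for odd `k`; consequently `−(v_n^+)''(x) ∈ H₀(v_n^+(x))` for all
`x ∈ (0,1)` distinct from the points `j/n`. -/
noncomputable def fk (n : ℕ) (k : ℤ) (x : ℝ) : ℝ :=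
  if Even k then -(x - (k:ℝ)/n) ^ 2 / 2 + (x - (k:ℝ)/n) / (2 * n)
  else (x - (k:ℝ)/n) ^ 2 / 2 - (x - (k:ℝ)/n) / (2 * n)

lemma floor_eq_of_mem {n : ℕ} (hn : 1 ≤ n) {k : ℤ} {x : ℝ}
    (h1 : (k : ℝ) / n < x) (h2 : x < ((k : ℝ) + 1) / n) : ⌊(n : ℝ) * x⌋ = k := by
  have hn' : (0 : ℝ) < n := by exact_mod_cast hn
  rw [Int.floor_eq_iff]
  constructor
  · have := (div_lt_iff₀ hn').1 h1
    linarith [this]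
  · have := (lt_div_iff₀ hn').1 h2
    push_cast
    linarith [this]

lemma vplus_eq {n : ℕ} (hn : 1 ≤ n) {k : ℤ} {x : ℝ}
    (h1 : (k : ℝ) / n < x) (h2 : x < ((k : ℝ) + 1) / n) : vplus n x = fk n k x := by
  unfold vplus fk
  rw [floor_eq_of_mem hn h1 h2]

lemma deriv_fk (n : ℕ) (k : ℤ) :
    deriv (fk n k) = fun x => if Even k then -(x - (k:ℝ)/n) + 1/(2*n) else (x - (k:ℝ)/n) - 1/(2*n) := by
  funext x
  set c : ℝ := (k:ℝ)/n
  have h : HasDerivAt (fun x : ℝ => x - c) 1 x := (hasDerivAt_id x).sub_const c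
  have hsq : HasDerivAt (fun x : ℝ => (x - c)^2) (2*(x-c)) x := by
    have := h.fun_pow 2; simpa using this
  by_cases hk : Even k
  · have H : HasDerivAt (fk n k) (-(x - c) + 1/(2*n)) x := by
      have := (hsq.fun_neg.div_const 2).fun_add (h.div_const (2*(n:ℝ)))
      have heq : (fk n k) = fun x => -(x-c)^2/2 + (x-c)/(2*n) := by
        funext y; simp [fk, hk]; rfl
      rw [heq]
      exact this.congr_deriv (by ring)
    simp [H.deriv, hk]
  · have H : HasDerivAt (fk n k) ((x - c) - 1/(2*n)) x := by
      have := (hsq.div_const 2).fun_sub (h.div_const (2*(n:ℝ)))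
      have heq : (fk n k) = fun x => (x-c)^2/2 - (x-c)/(2*n) := by
        funext y; simp [fk, hk]; rfl
      rw [heq]
      exact this.congr_deriv (by ring)
    simp [H.deriv, hk]

lemma deriv2_fk (n : ℕ) (k : ℤ) (x : ℝ) :
    deriv (deriv (fk n k)) x = if Even k then -1 else 1 := by
  rw [deriv_fk]
  set c : ℝ := (k:ℝ)/n
  have h : HasDerivAt (fun x : ℝ => x - c) 1 x := (hasDerivAt_id x).sub_const c
  by_cases hk : Even k
  · have H : HasDerivAt (fun x : ℝ => -(x - c) + 1/(2*(n:ℝ))) (-1) x := by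
      simpa using (h.neg.add_const (1/(2*(n:ℝ))))
    simp only [hk, if_true]
    exact H.deriv
  · have H : HasDerivAt (fun x : ℝ => (x - c) - 1/(2*(n:ℝ))) 1 x := by
      simpa using (h.sub_const (1/(2*(n:ℝ))))
    simp only [hk, if_false]
    exact H.deriv

lemma deriv2_vplus {n : ℕ} (hn : 1 ≤ n) {k : ℤ} {x : ℝ}
    (h1 : (k : ℝ) / n < x) (h2 : x < ((k : ℝ) + 1) / n) :
    deriv (deriv (vplus n)) x = if Even k then -1 else 1 := by
  have hmem : Set.Ioo ((k:ℝ)/n) (((k:ℝ)+1)/n) ∈ nhds x :=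
    isOpen_Ioo.mem_nhds ⟨h1, h2⟩
  have hev : vplus n =ᶠ[nhds x] fk n k := by
    filter_upwards [hmem] with y hy
    exact vplus_eq hn hy.1 hy.2
  have := (hev.deriv.deriv).eq_of_nhds
  rw [this, deriv2_fk]

lemma vplus_sign {n : ℕ} (hn : 1 ≤ n) {k : ℤ} {x : ℝ}
    (h1 : (k : ℝ) / n < x) (h2 : x < ((k : ℝ) + 1) / n) :
    (Even k → 0 < vplus n x) ∧ (¬ Even k → vplus n x < 0) := by
  have hn' : (0 : ℝ) < n := by exact_mod_cast hn
  rw [vplus_eq hn h1 h2]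
  set c : ℝ := (k:ℝ)/n
  have hy0 : 0 < x - c := by linarith
  have hy1 : x - c < 1/n := by
    have hh : ((k:ℝ)+1)/n = c + 1/n := by rw [add_div]
    rw [hh] at h2; linarith
  have key : 0 < -(x-c)^2/2 + (x-c)/(2*n) := by
    have h2n : -(x-c)^2/2 + (x-c)/(2*n) = (x-c) * (1/n - (x-c)) / 2 := by
      ring
    rw [h2n]
    have : (0:ℝ) < 1/n - (x-c) := by linarith
    positivity
  constructor
  · intro hk; simp [fk, hk]; linarith [key]
  · intro hk; simp [fk, hk]; linarith [key]

theorem stmt5 (n : ℕ) (hn : 1 ≤ n) :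
    (∀ k : ℕ, k < n → ∀ x ∈ Set.Ioo ((k : ℝ) / n) (((k : ℝ) + 1) / n),
      deriv (deriv (vplus n)) x = -((-1 : ℝ) ^ k) ∧
      (Even k → 0 < vplus n x) ∧ (Odd k → vplus n x < 0)) ∧
    (∀ x ∈ Set.Ioo (0 : ℝ) 1, (∀ j : ℕ, j ≤ n → x ≠ (j : ℝ) / n) →
      -(deriv (deriv (vplus n)) x) ∈ H0 (vplus n x)) := by
  have hn' : (0 : ℝ) < n := by exact_mod_cast hn
  have part1 : ∀ k : ℕ, k < n → ∀ x ∈ Set.Ioo ((k : ℝ) / n) (((k : ℝ) + 1) / n),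
      deriv (deriv (vplus n)) x = -((-1 : ℝ) ^ k) ∧
      (Even k → 0 < vplus n x) ∧ (Odd k → vplus n x < 0) := by
    intro k hk x hx
    have h1 : (((k : ℤ) : ℝ)) / n < x := by rw [Int.cast_natCast]; exact hx.1
    have h2 : x < (((k : ℤ) : ℝ) + 1) / n := by rw [Int.cast_natCast]; exact hx.2
    have hd := deriv2_vplus hn h1 h2
    have hs := vplus_sign hn h1 h2
    have hev : Even ((k : ℤ)) ↔ Even k := Int.even_coe_nat k
    refine ⟨?_, fun he => hs.1 (hev.2 he), fun ho => hs.2 (fun he => (Nat.not_even_iff_odd.2 ho) (hev.1 he))⟩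
    rcases Nat.even_or_odd k with hke | hko
    · rw [hd, if_pos (hev.2 hke), hke.neg_one_pow]
    · rw [hd, if_neg (fun he => (Nat.not_even_iff_odd.2 hko) (hev.1 he)), hko.neg_one_pow]
      ring
  refine ⟨part1, ?_⟩
  intro x hx hne
  set K : ℤ := ⌊(n : ℝ) * x⌋ with hK
  have h0 : 0 ≤ K := Int.floor_nonneg.2 (by nlinarith [hx.1])
  have hKn : K < (n : ℤ) := by
    rw [hK]
    exact Int.floor_lt.2 (by push_cast; nlinarith [hx.2])
  set k : ℕ := K.toNat with hk
  have hkK : (k : ℤ) = K := Int.toNat_of_nonneg h0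
  have hkn : k < n := by omega
  have hfl : ((k : ℝ)) ≤ (n : ℝ) * x := by
    have := Int.floor_le ((n : ℝ) * x)
    rw [← hK, ← hkK] at this
    exact_mod_cast this
  have h1 : (k : ℝ) / n < x := by
    rcases lt_or_eq_of_le hfl with h | h
    · exact (div_lt_iff₀ hn').2 (by linarith)
    · exact absurd (by field_simp [h]; linarith) (hne k hkn.le)
  have h2 : x < ((k : ℝ) + 1) / n := by
    have := Int.lt_floor_add_one ((n : ℝ) * x)
    rw [← hK, ← hkK] at this
    rw [lt_div_iff₀ hn']
    push_cast at this ⊢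
    linarith
  obtain ⟨hd, hpos, hneg⟩ := part1 k hkn x ⟨h1, h2⟩
  rcases Nat.even_or_odd k with hke | hko
  · have hv := hpos hke
    rw [hd, hke.neg_one_pow]
    simp [H0, not_lt.2 hv.le, hv.ne']
  · have hv := hneg hko
    rw [hd, hko.neg_one_pow]
    simp [H0, hv]
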